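/- (Lemma 1(i)). Let ℓ ≥ 2 and let g be a kernel of ℓ dimensions. Fix k ∈ {0,…,ℓ−2} and define the kernel g̃ by g̃(v_0,…,v_{ℓ−1}) = g(v_0,…,v_{k−1}, v_{k+1}, v_k, v_{k+2},…,v_{ℓ−1}) (input coordinates k and k+1 swapped). If D_g(k) > D_g(k+1), then ∏_{i=0}^{ℓ−1} D_g(i) ≤ ∏_{i=0}^{ℓ−1} D_{g̃}(i); equivalently E(g) ≤ E(g̃). -/

import Mathlib

/-- The `i`-th partial distance of a kernel `g` of `ℓ` dimensions:
`D_g(i) = min { d_H(g(w•0•u), g(w•1•v)) : w ∈ {0,1}^i, u, v ∈ {0,1}^{ℓ−1−i} }`,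
phrased via pairs of inputs that agree on coordinates `< i` and differ as `0`/`1`
at coordinate `i`. -/
noncomputable def partialDist {ℓ : ℕ} (g : (Fin ℓ → ZMod 2) → (Fin ℓ → ZMod 2)) (i : ℕ) : ℕ :=
  sInf { d | ∃ x y : Fin ℓ → ZMod 2,
    (∀ j : Fin ℓ, (j : ℕ) < i → x j = y j) ∧
    (∀ j : Fin ℓ, (j : ℕ) = i → x j = 0 ∧ y j = 1) ∧
    d = hammingDist (g x) (g y) }

/-!
Let `σ` swap the input coordinates `k` and `k + 1`, so that `g' v = g (v ∘ σ)`. Precomposing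
an admissible pair of `g'` at position `σ i` with `σ` gives an admissible pair of `g` at position
`i`, as long as `σ` maps the prefix below `i` into the prefix below `σ i`; for the adjacent swap this
holds for every `i ≠ k + 1`, so `D_g(i) ≤ D_{g'}(σ i)`. For `i = k + 1` the pair obtained from `g'`
at position `k` first differs at `k` or at `k + 1`, which only gives
`min (D_g(k), D_g(k+1)) ≤ D_{g'}(k)`; the hypothesis `D_g(k+1) < D_g(k)` makes this minimum
`D_g(k+1)`. Hence `D_g(i) ≤ D_{g'}(σ i)` for all `i`, and multiplying over the permutation `σ`
compares the products.
-/

section PartialDist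

variable {ℓ : ℕ} {g : (Fin ℓ → ZMod 2) → (Fin ℓ → ZMod 2)}

theorem le_partialDist {i : Fin ℓ} {n : ℕ}
    (h : ∀ x y : Fin ℓ → ZMod 2, (∀ j < i, x j = y j) → x i = 0 → y i = 1 →
      n ≤ hammingDist (g x) (g y)) :
    n ≤ partialDist g i := by
  refine le_csInf ⟨_, 0, Pi.single i 1, fun j hj => ?_, fun j hj => ?_, rfl⟩ ?_
  · simp [Fin.ne_of_lt hj]
  · simp [Fin.ext hj]
  · rintro _ ⟨x, y, hxy, hi, rfl⟩
    exact h x y hxy (hi i rfl).1 (hi i rfl).2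

theorem partialDist_le_hammingDist {i : Fin ℓ} {x y : Fin ℓ → ZMod 2}
    (hxy : ∀ j < i, x j = y j) (hi : x i ≠ y i) :
    partialDist g i ≤ hammingDist (g x) (g y) := by
  have zmod_two_ne : ∀ a b : ZMod 2, a ≠ b → (a = 0 ∧ b = 1) ∨ (b = 0 ∧ a = 1) := by decide
  rcases zmod_two_ne _ _ hi with hi' | hi'
  · exact Nat.sInf_le ⟨x, y, hxy, fun j hj => Fin.ext hj ▸ hi', rfl⟩
  · rw [hammingDist_comm]
    exact Nat.sInf_le ⟨y, x, fun j hj => (hxy j hj).symm, fun j hj => Fin.ext hj ▸ hi', rfl⟩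

theorem min_partialDist_le_hammingDist {a b : Fin ℓ} (hab : (b : ℕ) = a + 1)
    {x y : Fin ℓ → ZMod 2} (hxy : ∀ j < a, x j = y j) (hb : x b ≠ y b) :
    min (partialDist g a) (partialDist g b) ≤ hammingDist (g x) (g y) := by
  by_cases ha : x a = y a
  · refine (min_le_right _ _).trans (partialDist_le_hammingDist (fun j hj => ?_) hb)
    rcases (show j < a ∨ j = a by rw [Fin.lt_def] at hj ⊢; rw [Fin.ext_iff]; omega)
      with hj | rfl
    exacts [hxy j hj, ha]
  · exact (min_le_left _ _).trans (partialDist_le_hammingDist hxy ha)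

theorem partialDist_le_partialDist_comp_perm (σ : Equiv.Perm (Fin ℓ)) {i : Fin ℓ}
    (hσ : ∀ j < i, σ j < σ i) :
    partialDist g i ≤ partialDist (fun v => g (v ∘ σ)) (σ i) :=
  le_partialDist fun x y hxy hx hy =>
    partialDist_le_hammingDist (fun j hj => hxy (σ j) (hσ j hj)) (by simp [hx, hy])

theorem min_partialDist_le_partialDist_comp_swap {a b : Fin ℓ} (hab : (b : ℕ) = a + 1) :
    min (partialDist g a) (partialDist g b) ≤
      partialDist (fun v => g (v ∘ Equiv.swap a b)) a := by
  refine le_partialDist fun x y hxy hx hy => min_partialDist_le_hammingDist hab (fun j hj => ?_) ?_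
  · have hja : j ≠ a := hj.ne
    have hjb : j ≠ b := fun h => by rw [h, Fin.lt_def] at hj; omega
    simpa [Equiv.swap_apply_of_ne_of_ne hja hjb] using hxy j hj
  · simp [hx, hy]

end PartialDist

theorem Fin.swap_lt_swap_of_lt {n : ℕ} {a b i j : Fin n} (hab : (b : ℕ) = a + 1) (hi : i ≠ b)
    (hji : j < i) : Equiv.swap a b j < Equiv.swap a b i := by
  simp only [Equiv.swap_apply_def]
  rw [Fin.lt_def] at hji ⊢
  split_ifs <;> simp_all [Fin.ext_iff] <;> omega

theorem swap_prod_partialDist_le {ℓ : ℕ} (hℓ : 2 ≤ ℓ)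
    (g : (Fin ℓ → ZMod 2) → (Fin ℓ → ZMod 2))
    (k : ℕ) (hk : k ≤ ℓ - 2)
    (g' : (Fin ℓ → ZMod 2) → (Fin ℓ → ZMod 2))
    (hg' : ∀ v, g' v =
      g (v ∘ ⇑(Equiv.swap (⟨k, by omega⟩ : Fin ℓ) (⟨k + 1, by omega⟩ : Fin ℓ))))
    (hgt : partialDist g (k + 1) < partialDist g k) :
    ∏ i ∈ Finset.range ℓ, partialDist g i ≤ ∏ i ∈ Finset.range ℓ, partialDist g' i := by
  set a : Fin ℓ := ⟨k, by omega⟩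
  set b : Fin ℓ := ⟨k + 1, by omega⟩
  have hab : (b : ℕ) = a + 1 := rfl
  have hg'_eq : g' = fun v => g (v ∘ Equiv.swap a b) := funext hg'
  have hle : ∀ i : Fin ℓ, partialDist g i ≤ partialDist g' (Equiv.swap a b i) := by
    intro i
    rw [hg'_eq]
    by_cases hi : i = b
    · subst hi
      rw [Equiv.swap_apply_right]
      exact (le_min hgt.le le_rfl).trans (min_partialDist_le_partialDist_comp_swap hab)
    · exact partialDist_le_partialDist_comp_perm _ fun j => Fin.swap_lt_swap_of_lt hab hi
  rw [← Fin.prod_univ_eq_prod_range, ← Fin.prod_univ_eq_prod_range]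
  exact (Finset.prod_le_prod' fun i _ => hle i).trans_eq
    (Equiv.prod_comp (Equiv.swap a b) fun i => partialDist g' i)
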